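/- Suppose ν ∈ ℝ^m and μ ∈ ℝ^n have all entries strictly positive, T_E(ν,μ) is nonempty, and there exists C ⊆ I with ∑_{j∈N_{E∖E_r}(C)} μ_j > ∑_{i∈C} ν_i, where E_r is the set of redundant edges of T_E(ν,μ). Then δ_E(ν,μ) = δ_{E∖E_r}(ν,μ), where each CRP-gap is computed for the indicated edge set with respect to that edge set's own redundant edges; i.e., removing the redundant edges does not change the CRP-gap. -/

import Mathlib

open scoped Classical

noncomputable section

variable {m n : ℕ}

/-- The transportation polytope `T_E(ν,μ)`: nonnegative `m × n` matrices with row sums `ν`,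
column sums `μ`, supported on the edge set `E`. -/
def transportationPolytope (ν : Fin m → ℝ) (μ : Fin n → ℝ)
    (E : Finset (Fin m × Fin n)) : Set (Fin m → Fin n → ℝ) :=
  {x | (∀ i j, 0 ≤ x i j) ∧ (∀ i, ∑ j, x i j = ν i) ∧
    (∀ j, ∑ i, x i j = μ j) ∧ ∀ i j, (i, j) ∉ E → x i j = 0}

/-- The neighborhood `N_F(S) = {j : ∃ i ∈ S, (i,j) ∈ F}`. -/
def nbr (F : Finset (Fin m × Fin n)) (S : Finset (Fin m)) : Finset (Fin n) :=
  Finset.univ.filter fun j => ∃ i ∈ S, (i, j) ∈ F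

/-- `ν` satisfies the capacity condition for `(μ, E)`. -/
def capacityCond (ν : Fin m → ℝ) (μ : Fin n → ℝ) (E : Finset (Fin m × Fin n)) : Prop :=
  ∀ S : Finset (Fin m), ∑ i ∈ S, ν i ≤ ∑ j ∈ nbr E S, μ j

/-- The CRP condition for `(ν, μ, E)`. -/
def crpCond (ν : Fin m → ℝ) (μ : Fin n → ℝ) (E : Finset (Fin m × Fin n)) : Prop :=
  (∑ i, ν i) = (∑ j, μ j) ∧
  ∀ S : Finset (Fin m), S.Nonempty → S ≠ Finset.univ →
    ∑ i ∈ S, ν i < ∑ j ∈ nbr E S, μ j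

/-- The bipartite simple graph `G(F)` on `I ⊔ J` determined by the edge set `F`. -/
def bipartiteGraph (F : Finset (Fin m × Fin n)) : SimpleGraph (Fin m ⊕ Fin n) :=
  SimpleGraph.fromRel fun u v => ∃ i j, u = Sum.inl i ∧ v = Sum.inr j ∧ (i, j) ∈ F

/-- The number of connected components of `G(F)`. -/
def numComponents (F : Finset (Fin m × Fin n)) : ℕ :=
  Nat.card (bipartiteGraph F).ConnectedComponent

/-- The set `E_r` of redundant edges of `T_E(ν,μ)`. -/
def redundantEdges (ν : Fin m → ℝ) (μ : Fin n → ℝ)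
    (E : Finset (Fin m × Fin n)) : Finset (Fin m × Fin n) :=
  E.filter fun e => ∀ x ∈ transportationPolytope ν μ E, x e.1 e.2 = 0

/-- The ERP number of `T_E(ν,μ)`: the number of connected components of `G(E ∖ E_r)`. -/
def erpNumber (ν : Fin m → ℝ) (μ : Fin n → ℝ) (E : Finset (Fin m × Fin n)) : ℕ :=
  numComponents (E \ redundantEdges ν μ E)

/-- The support edge set `B(x) = {(i,j) ∈ E : x_{ij} > 0}`. -/
def supportEdges (E : Finset (Fin m × Fin n)) (x : Fin m → Fin n → ℝ) :
    Finset (Fin m × Fin n) :=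
  E.filter fun e => 0 < x e.1 e.2

/-- The indicator vector `𝟙_S ∈ ℝ^m` of `S ⊆ I`. -/
def indicatorVec (S : Finset (Fin m)) : Fin m → ℝ := fun i => if i ∈ S then 1 else 0

/-- `S ⊆ I` is binding if `∑_{i∈S} ν_i = ∑_{j∈N_E(S)} μ_j`. -/
def IsBinding (ν : Fin m → ℝ) (μ : Fin n → ℝ) (E : Finset (Fin m × Fin n))
    (S : Finset (Fin m)) : Prop :=
  (∑ i ∈ S, ν i) = ∑ j ∈ nbr E S, μ j

/-- The greatest common divisor of all `m + n` components of `ν` and `μ`. -/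
def gcdVec (ν : Fin m → ℕ) (μ : Fin n → ℕ) : ℕ :=
  Nat.gcd (Finset.univ.gcd ν) (Finset.univ.gcd μ)

/-- `d_⋆ = max {1, m + n − (∑ᵢ νᵢ) / gcd(ν,μ)}`. -/
def dStar (ν : Fin m → ℕ) (μ : Fin n → ℕ) : ℕ :=
  max 1 (m + n - (∑ i, ν i) / gcdVec ν μ)

/-- The CRP-gap `δ_F(ν,μ)` of the edge set `F` (computed with respect to the redundant
edges of `T_F(ν,μ)`). -/
def crpGap (ν : Fin m → ℝ) (μ : Fin n → ℝ) (F : Finset (Fin m × Fin n)) : ℝ :=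
  sInf {t : ℝ | ∃ C : Finset (Fin m),
    (∑ i ∈ C, ν i) < (∑ j ∈ nbr (F \ redundantEdges ν μ F) C, μ j) ∧
    t = (∑ j ∈ nbr F C, μ j) - ∑ i ∈ C, ν i}

/-- The CRP-graph relation `R` on the connected components of `G(E ∖ E_r)`:
`R c₁ c₂` holds iff `c₁ ≠ c₂` and some edge `(i,j) ∈ E` has `i` in the demand side of `c₁`
and `j` in the supply side of `c₂`. -/
def crpRel (ν : Fin m → ℝ) (μ : Fin n → ℝ) (E : Finset (Fin m × Fin n)) :
    (bipartiteGraph (E \ redundantEdges ν μ E)).ConnectedComponent →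
    (bipartiteGraph (E \ redundantEdges ν μ E)).ConnectedComponent → Prop :=
  fun c₁ c₂ => c₁ ≠ c₂ ∧ ∃ i j, (i, j) ∈ E ∧
    (bipartiteGraph (E \ redundantEdges ν μ E)).connectedComponentMk (Sum.inl i) = c₁ ∧
    (bipartiteGraph (E \ redundantEdges ν μ E)).connectedComponentMk (Sum.inr j) = c₂

end

/-!
Write `E' = E ∖ E_r` and `s_F(C) = μ(N_F(C)) − ν(C)` (the `surplus`). Since `E'` has no
redundant edges of its own, the two gaps are the infima of `s_E(C) ≥ s_{E'}(C)` and of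
`s_{E'}(C)` over the same sets `C`, those with `s_{E'}(C) > 0`. It thus suffices to replace such
a `C` by a set `D` with `N_E(D) = N_{E'}(D)` and `0 < s_{E'}(D) ≤ s_{E'}(C)`.

Fix `x` in the polytope, positive on all of `E'`. If some `E`-edge leaves `C` to a node outside
`N_{E'}(C)`, let `V` be the set of demand nodes reachable from such nodes by alternating paths
(`E'`-edges back, `E`-edges forward). `V` is a union of components of `G(E')` saturated by `x`,
so `s_{E'}(V) = 0` and `s_{E'}(C ∪ V) + s_{E'}(C ∩ V) = s_{E'}(C)`, both terms being nonnegative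
by Hall. If the first is positive, `C ∪ V` is closed under `E`; otherwise recurse on `C ∩ V`,
which is strictly smaller than `C`: an alternating path returning to the tail of an edge of
`E ∖ E'` would give a circulation along which `x` can be perturbed to charge that redundant edge.
-/

open Finset Filter Topology

section

variable {m n : ℕ} {ν : Fin m → ℝ} {μ : Fin n → ℝ}

section Neighborhood

variable {F F' : Finset (Fin m × Fin n)} {S T : Finset (Fin m)}

@[simp]
lemma mem_nbr {j : Fin n} : j ∈ nbr F S ↔ ∃ i ∈ S, (i, j) ∈ F := by
  simp [nbr]

lemma nbr_subset_nbr (h : F ⊆ F') : nbr F S ⊆ nbr F' S := by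
  intro j hj
  obtain ⟨i, hi, hij⟩ := mem_nbr.1 hj
  exact mem_nbr.2 ⟨i, hi, h hij⟩

lemma nbr_union : nbr F (S ∪ T) = nbr F S ∪ nbr F T := by
  ext j
  simp [or_and_right, exists_or]

def surplus (ν : Fin m → ℝ) (μ : Fin n → ℝ) (F : Finset (Fin m × Fin n))
    (S : Finset (Fin m)) : ℝ :=
  ∑ j ∈ nbr F S, μ j - ∑ i ∈ S, ν i

lemma surplus_le_surplus (hμ : ∀ j, 0 ≤ μ j) (h : F ⊆ F') :
    surplus ν μ F S ≤ surplus ν μ F' S := by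
  unfold surplus
  gcongr
  · exact fun j _ _ => hμ j
  · exact nbr_subset_nbr h

lemma surplus_union_add_surplus_inter (h : nbr F (S ∩ T) = nbr F S ∩ nbr F T) :
    surplus ν μ F (S ∪ T) + surplus ν μ F (S ∩ T) = surplus ν μ F S + surplus ν μ F T := by
  have hμ := sum_union_inter (s₁ := nbr F S) (s₂ := nbr F T) (f := μ)
  have hν := sum_union_inter (s₁ := S) (s₂ := T) (f := ν)
  simp only [surplus, nbr_union, h]
  linarith

lemma crpGap_eq_sInf_surplus (F : Finset (Fin m × Fin n)) :
    crpGap ν μ F = sInf {t | ∃ C, 0 < surplus ν μ (F \ redundantEdges ν μ F) C ∧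
      t = surplus ν μ F C} := by
  simp only [crpGap, surplus, sub_pos]

end Neighborhood

section Polytope

variable {E F : Finset (Fin m × Fin n)} {x : Fin m → Fin n → ℝ}

lemma convex_transportationPolytope : Convex ℝ (transportationPolytope ν μ E) := by
  rintro x ⟨hx0, hxr, hxc, hxE⟩ y ⟨hy0, hyr, hyc, hyE⟩ a b ha hb hab
  refine ⟨fun i j => ?_, fun i => ?_, fun j => ?_, fun i j hij => ?_⟩ <;>
    simp only [Pi.add_apply, Pi.smul_apply, smul_eq_mul]
  · have := hx0 i j
    have := hy0 i j
    positivity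
  · rw [sum_add_distrib, ← mul_sum, ← mul_sum, hxr, hyr, ← add_mul, hab, one_mul]
  · rw [sum_add_distrib, ← mul_sum, ← mul_sum, hxc, hyc, ← add_mul, hab, one_mul]
  · rw [hxE i j hij, hyE i j hij]
    ring

lemma transportationPolytope_sdiff_redundantEdges :
    transportationPolytope ν μ (E \ redundantEdges ν μ E) = transportationPolytope ν μ E := by
  ext x
  refine ⟨fun ⟨h0, hr, hc, hE⟩ => ⟨h0, hr, hc, fun i j hij => hE i j fun h => hij (mem_sdiff.1 h).1⟩,
    fun hx => ⟨hx.1, hx.2.1, hx.2.2.1, fun i j hij => ?_⟩⟩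
  by_cases hE : (i, j) ∈ E
  · have hred : (i, j) ∈ redundantEdges ν μ E := by
      by_contra h
      exact hij (mem_sdiff.2 ⟨hE, h⟩)
    exact (mem_filter.1 hred).2 x hx
  · exact hx.2.2.2 i j hE

lemma redundantEdges_sdiff_redundantEdges :
    redundantEdges ν μ (E \ redundantEdges ν μ E) = ∅ := by
  refine eq_empty_of_forall_notMem fun e he => ?_
  obtain ⟨he', hzero⟩ := mem_filter.1 he
  rw [transportationPolytope_sdiff_redundantEdges] at hzero
  exact (mem_sdiff.1 he').2 (mem_filter.2 ⟨(mem_sdiff.1 he').1, hzero⟩)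

lemma exists_pos_of_notMem_redundantEdges {e : Fin m × Fin n} (he : e ∈ E)
    (hr : e ∉ redundantEdges ν μ E) :
    ∃ y ∈ transportationPolytope ν μ E, 0 < y e.1 e.2 := by
  have : ¬ ∀ y ∈ transportationPolytope ν μ E, y e.1 e.2 = 0 := fun h =>
    hr (mem_filter.2 ⟨he, h⟩)
  push Not at this
  obtain ⟨y, hy, hye⟩ := this
  exact ⟨y, hy, (hy.1 e.1 e.2).lt_of_ne' hye⟩

lemma exists_pos_on_sdiff_redundantEdges (hne : (transportationPolytope ν μ E).Nonempty) :
    ∃ x ∈ transportationPolytope ν μ E, ∀ e ∈ E \ redundantEdges ν μ E, 0 < x e.1 e.2 := by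
  suffices h : ∀ s ⊆ E \ redundantEdges ν μ E,
      ∃ x ∈ transportationPolytope ν μ E, ∀ e ∈ s, 0 < x e.1 e.2 from h _ subset_rfl
  intro s
  induction s using Finset.induction_on with
  | empty =>
    obtain ⟨x, hx⟩ := hne
    exact fun _ => ⟨x, hx, by simp⟩
  | insert e s _ ih =>
    intro hs
    obtain ⟨x, hx, hxs⟩ := ih ((subset_insert e s).trans hs)
    obtain ⟨he, hr⟩ := mem_sdiff.1 (hs (mem_insert_self e s))
    obtain ⟨y, hy, hye⟩ := exists_pos_of_notMem_redundantEdges he hr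
    refine ⟨(1 / 2 : ℝ) • x + (1 / 2 : ℝ) • y,
      convex_transportationPolytope hx hy (by norm_num) (by norm_num) (by norm_num), ?_⟩
    intro f hf
    simp only [Pi.add_apply, Pi.smul_apply, smul_eq_mul]
    rcases mem_insert.1 hf with rfl | hf
    · linarith [hx.1 f.1 f.2]
    · linarith [hxs f hf, hy.1 f.1 f.2]

lemma sum_nbr_eq_of_mem (hx : x ∈ transportationPolytope ν μ F) {S : Finset (Fin m)}
    {i : Fin m} (hi : i ∈ S) : ∑ j ∈ nbr F S, x i j = ν i := by
  rw [← hx.2.1 i]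
  exact sum_subset (subset_univ _) fun j _ hj =>
    hx.2.2.2 i j fun hij => hj (mem_nbr.2 ⟨i, hi, hij⟩)

lemma surplus_nonneg_of_mem (hx : x ∈ transportationPolytope ν μ F) (S : Finset (Fin m)) :
    0 ≤ surplus ν μ F S := by
  rw [surplus, sub_nonneg]
  calc ∑ i ∈ S, ν i = ∑ j ∈ nbr F S, ∑ i ∈ S, x i j := by
        rw [sum_comm]
        exact sum_congr rfl fun i hi => (sum_nbr_eq_of_mem hx hi).symm
    _ ≤ ∑ j ∈ nbr F S, ∑ i, x i j := sum_le_sum fun j _ =>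
        sum_le_sum_of_subset_of_nonneg (subset_univ _) fun i _ _ => hx.1 i j
    _ = ∑ j ∈ nbr F S, μ j := sum_congr rfl fun j _ => hx.2.2.1 j

lemma exists_mem_of_pos (hx : x ∈ transportationPolytope ν μ F) {j : Fin n} (hj : 0 < μ j) :
    ∃ i, (i, j) ∈ F := by
  by_contra! h
  have : μ j = 0 := by
    rw [← hx.2.2.1 j]
    exact sum_eq_zero fun i _ => hx.2.2.2 i j (h i)
  exact hj.ne' this

lemma exists_add_smul_mem (hx : x ∈ transportationPolytope ν μ E) {c : Fin m → Fin n → ℝ}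
    (hcE : ∀ i j, (i, j) ∉ E → c i j = 0) (hc0 : ∀ i j, x i j = 0 → 0 ≤ c i j)
    (hrow : ∀ i, ∑ j, c i j = 0) (hcol : ∀ j, ∑ i, c i j = 0) :
    ∃ ε > (0 : ℝ), x + ε • c ∈ transportationPolytope ν μ E := by
  obtain ⟨h0, hr, hc, hxE⟩ := hx
  have hev : ∀ᶠ ε in 𝓝[>] (0 : ℝ), ∀ i j, 0 ≤ x i j + ε * c i j := by
    simp only [eventually_all]
    intro i j
    rcases (h0 i j).eq_or_lt with hzero | hpos
    · filter_upwards [self_mem_nhdsWithin] with ε (hε : 0 < ε)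
      have := hc0 i j hzero.symm
      rw [← hzero]
      positivity
    · have hlim : Tendsto (fun ε : ℝ => x i j + ε * c i j) (𝓝[>] 0) (𝓝 (x i j)) := by
        have : Continuous fun ε : ℝ => x i j + ε * c i j := by fun_prop
        simpa using (this.tendsto 0).mono_left nhdsWithin_le_nhds
      exact (hlim.eventually_const_lt hpos).mono fun _ h => h.le
  obtain ⟨ε, hnn, hε⟩ := (hev.and self_mem_nhdsWithin).exists
  refine ⟨ε, hε, fun i j => hnn i j, fun i => ?_, fun j => ?_, fun i j hij => ?_⟩ <;>
    simp only [Pi.add_apply, Pi.smul_apply, smul_eq_mul]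
  · rw [sum_add_distrib, ← mul_sum, hr, hrow, mul_zero, add_zero]
  · rw [sum_add_distrib, ← mul_sum, hc, hcol, mul_zero, add_zero]
  · rw [hxE i j hij, hcE i j hij, mul_zero, add_zero]

end Polytope

section AlternatingPaths

variable (E E' : Finset (Fin m × Fin n))

def AltStep (i i' : Fin m) : Prop :=
  ∃ j, (i, j) ∈ E ∧ (i', j) ∈ E'

def AltReach (j : Fin n) (i : Fin m) : Prop :=
  ∃ i₀, (i₀, j) ∈ E' ∧ Relation.ReflTransGen (AltStep E E') i₀ i

def IsAltClosed (S : Finset (Fin m)) : Prop :=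
  ∀ ⦃i i'⦄, i ∈ S → AltStep E E' i i' → i' ∈ S

noncomputable def reachSet (C : Finset (Fin m)) : Finset (Fin m) :=
  univ.filter fun i => ∃ j ∈ nbr E C \ nbr E' C, AltReach E E' j i

def edgeSingle (i : Fin m) (j : Fin n) : Fin m → Fin n → ℝ :=
  fun a b => if a = i ∧ b = j then 1 else 0

structure IsAltFlow (p : Fin m → Fin n → ℝ) (r : Fin m → ℝ) (s : Fin n → ℝ) : Prop where
  eq_zero : ∀ a b, (a, b) ∉ E → p a b = 0
  nonneg : ∀ a b, (a, b) ∉ E' → 0 ≤ p a b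
  sum_row : ∀ a, ∑ b, p a b = r a
  sum_col : ∀ b, ∑ a, p a b = s b

variable {E E'} {S C : Finset (Fin m)} {x : Fin m → Fin n → ℝ}

lemma AltReach.trans_edge {j j' : Fin n} {i i' : Fin m} (h₁ : AltReach E E' j i)
    (hij' : (i, j') ∈ E) (h₂ : AltReach E E' j' i') : AltReach E E' j i' := by
  obtain ⟨i₀, hi₀, hpath⟩ := h₁
  obtain ⟨i₁, hi₁, hpath'⟩ := h₂
  exact ⟨i₀, hi₀, (hpath.tail ⟨j', hij', hi₁⟩).trans hpath'⟩

lemma isAltClosed_reachSet : IsAltClosed E E' (reachSet E E' C) := by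
  intro i i' hi hstep
  obtain ⟨j, hj, i₀, hi₀, hpath⟩ := (mem_filter.1 hi).2
  exact mem_filter.2 ⟨mem_univ _, j, hj, i₀, hi₀, hpath.tail hstep⟩

lemma sdiff_nbr_subset_nbr_reachSet (hcov : ∀ j, ∃ i, (i, j) ∈ E') :
    nbr E C \ nbr E' C ⊆ nbr E' (reachSet E E' C) := by
  intro j hj
  obtain ⟨i, hij⟩ := hcov j
  exact mem_nbr.2 ⟨i, mem_filter.2 ⟨mem_univ _, j, hj, i, hij, .refl⟩, hij⟩

lemma nbr_inter_of_isAltClosed (hE : E' ⊆ E) (hS : IsAltClosed E E' S) :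
    nbr E' (C ∩ S) = nbr E' C ∩ nbr E' S := by
  ext j
  simp only [mem_inter, mem_nbr]
  constructor
  · rintro ⟨i, ⟨hiC, hiS⟩, hij⟩
    exact ⟨⟨i, hiC, hij⟩, i, hiS, hij⟩
  · rintro ⟨⟨i, hiC, hij⟩, i₀, hi₀S, hi₀j⟩
    exact ⟨i, ⟨hiC, hS hi₀S ⟨j, hE hi₀j, hij⟩⟩, hij⟩

lemma nbr_eq_of_isAltClosed (hE : E' ⊆ E) (hcov : ∀ j, ∃ i, (i, j) ∈ E')
    (hS : IsAltClosed E E' S) : nbr E S = nbr E' S := by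
  refine Subset.antisymm (fun j hj => ?_) (nbr_subset_nbr hE)
  obtain ⟨i, hiS, hij⟩ := mem_nbr.1 hj
  obtain ⟨i', hi'j⟩ := hcov j
  exact mem_nbr.2 ⟨i', hS hiS ⟨j, hij, hi'j⟩, hi'j⟩

/-- `S` is a union of components of `G(E')`, so `x` routes all of `μ(N_{E'}(S))` through `S`. -/
lemma surplus_eq_zero_of_isAltClosed (hE : E' ⊆ E) (hx : x ∈ transportationPolytope ν μ E')
    (hS : IsAltClosed E E' S) : surplus ν μ E' S = 0 := by
  have hcol : ∀ j ∈ nbr E' S, μ j = ∑ i ∈ S, x i j := by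
    intro j hj
    obtain ⟨i₀, hi₀S, hi₀j⟩ := mem_nbr.1 hj
    rw [← hx.2.2.1 j]
    refine (sum_subset (subset_univ _) fun i _ hiS => ?_).symm
    by_contra hne
    have hij : (i, j) ∈ E' := by
      by_contra hij
      exact hne (hx.2.2.2 i j hij)
    exact hiS (hS hi₀S ⟨j, hE hi₀j, hij⟩)
  rw [surplus, sub_eq_zero, sum_congr rfl hcol, sum_comm]
  exact sum_congr rfl fun i hi => sum_nbr_eq_of_mem hx hi

lemma isAltFlow_edgeSingle {i : Fin m} {j : Fin n} (hij : (i, j) ∈ E) :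
    IsAltFlow E E' (edgeSingle i j) (Pi.single i 1) (Pi.single j 1) where
  eq_zero a b hab := by
    rw [edgeSingle, if_neg]
    rintro ⟨rfl, rfl⟩
    exact hab hij
  nonneg a b _ := by unfold edgeSingle; positivity
  sum_row a := by by_cases ha : a = i <;> simp [edgeSingle, ha]
  sum_col b := by by_cases hb : b = j <;> simp [edgeSingle, hb]

lemma IsAltFlow.add {p q : Fin m → Fin n → ℝ} {r r' : Fin m → ℝ} {s s' : Fin n → ℝ}
    (hp : IsAltFlow E E' p r s) (hq : IsAltFlow E E' q r' s') :
    IsAltFlow E E' (p + q) (r + r') (s + s') where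
  eq_zero a b hab := by simp [hp.eq_zero a b hab, hq.eq_zero a b hab]
  nonneg a b hab := add_nonneg (hp.nonneg a b hab) (hq.nonneg a b hab)
  sum_row a := by simp [sum_add_distrib, hp.sum_row, hq.sum_row]
  sum_col b := by simp [sum_add_distrib, hp.sum_col, hq.sum_col]

lemma isAltFlow_neg_edgeSingle (hE : E' ⊆ E) {i : Fin m} {j : Fin n} (hij : (i, j) ∈ E') :
    IsAltFlow E E' (-edgeSingle i j) (-Pi.single i 1) (-Pi.single j 1) where
  eq_zero a b hab := by simp [(isAltFlow_edgeSingle (E' := E') (hE hij)).eq_zero a b hab]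
  nonneg a b hab := by simp [(isAltFlow_edgeSingle (E' := E') hij).eq_zero a b hab]
  sum_row a := by simp [sum_neg_distrib, (isAltFlow_edgeSingle (E' := E) hij).sum_row]
  sum_col b := by simp [sum_neg_distrib, (isAltFlow_edgeSingle (E' := E) hij).sum_col]

/-- An alternating path from `j` to `i` carries a unit flow, pushed along its `E`-edges and
pulled back along its `E'`-edges. -/
lemma AltReach.exists_isAltFlow (hE : E' ⊆ E) {j : Fin n} {i : Fin m}
    (h : AltReach E E' j i) :
    ∃ p, IsAltFlow E E' p (-Pi.single i 1) (-Pi.single j 1) := by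
  obtain ⟨i₀, hi₀, hpath⟩ := h
  induction hpath with
  | refl => exact ⟨_, isAltFlow_neg_edgeSingle hE hi₀⟩
  | @tail i i' _ hstep ih =>
    obtain ⟨p, hp⟩ := ih
    obtain ⟨j', hij', hi'j'⟩ := hstep
    refine ⟨p + edgeSingle i j' + -edgeSingle i' j', ?_⟩
    convert (hp.add (isAltFlow_edgeSingle hij')).add (isAltFlow_neg_edgeSingle hE hi'j')
      using 1 <;> abel

end AlternatingPaths

lemma exists_refl_of_forall_exists_pred {α : Type*} [Finite α] {r : α → α → Prop}
    (htrans : ∀ a b c, r a b → r b c → r a c) {s : Set α} (hs : s.Nonempty)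
    (hpred : ∀ a ∈ s, ∃ b ∈ s, r b a) : ∃ a, r a a := by
  by_contra! hirr
  have : IsTrans α r := ⟨htrans⟩
  have : Std.Irrefl r := ⟨hirr⟩
  obtain ⟨a, ha, hmin⟩ := (Finite.wellFounded_of_trans_of_irrefl r).has_min s hs
  obtain ⟨b, hb, hba⟩ := hpred a ha
  exact hmin b hb hba

section RelativeInterior

variable {E E' : Finset (Fin m × Fin n)} {x : Fin m → Fin n → ℝ}

/-- Closing the path by the edge `(i, j)` gives a circulation along which `x` could be
perturbed to become positive on `(i, j)`. -/
lemma not_altReach_of_notMem (hE : E' ⊆ E)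
    (hT : transportationPolytope ν μ E' = transportationPolytope ν μ E)
    (hx : x ∈ transportationPolytope ν μ E') (hpos : ∀ i j, (i, j) ∈ E' → 0 < x i j)
    {i : Fin m} {j : Fin n} (hij : (i, j) ∈ E) (hij' : (i, j) ∉ E') : ¬ AltReach E E' j i := by
  intro hreach
  obtain ⟨p, hp⟩ := hreach.exists_isAltFlow hE
  have hc := hp.add (isAltFlow_edgeSingle hij)
  obtain ⟨ε, hε, hy⟩ := exists_add_smul_mem (hT ▸ hx) hc.eq_zero
    (fun a b hab => hc.nonneg a b fun h => (hpos a b h).ne' hab)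
    (fun a => by rw [hc.sum_row]; simp) (fun b => by rw [hc.sum_col]; simp)
  rw [← hT] at hy
  have hyij := hy.2.2.2 i j hij'
  simp only [Pi.add_apply, Pi.smul_apply, smul_eq_mul, edgeSingle, and_self, if_true,
    hx.2.2.2 i j hij', zero_add] at hyij
  exact (mul_pos hε (by linarith [hp.nonneg i j hij'])).ne' hyij

lemma not_subset_reachSet (hE : E' ⊆ E)
    (hT : transportationPolytope ν μ E' = transportationPolytope ν μ E)
    (hx : x ∈ transportationPolytope ν μ E') (hpos : ∀ i j, (i, j) ∈ E' → 0 < x i j)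
    {C : Finset (Fin m)} (hs : (nbr E C \ nbr E' C).Nonempty) : ¬ C ⊆ reachSet E E' C := by
  intro hC
  have hpred : ∀ j ∈ nbr E C \ nbr E' C, ∃ j' ∈ nbr E C \ nbr E' C,
      ∃ i, AltReach E E' j' i ∧ (i, j) ∈ E ∧ (i, j) ∉ E' := by
    intro j hj
    obtain ⟨hjE, hjE'⟩ := mem_sdiff.1 hj
    obtain ⟨i, hiC, hij⟩ := mem_nbr.1 hjE
    obtain ⟨j', hj', hreach⟩ := (mem_filter.1 (hC hiC)).2
    exact ⟨j', hj', i, hreach, hij, fun h => hjE' (mem_nbr.2 ⟨i, hiC, h⟩)⟩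
  obtain ⟨j, i, hreach, hij, hij'⟩ := exists_refl_of_forall_exists_pred
    (fun _ _ _ ⟨_, h₁, h₂, _⟩ ⟨i, h₁', h₂', h₃'⟩ => ⟨i, h₁.trans_edge h₂ h₁', h₂', h₃'⟩)
    (coe_nonempty.2 hs) hpred
  exact not_altReach_of_notMem hE hT hx hpos hij hij' hreach

lemma exists_nbr_eq_surplus_le (hE : E' ⊆ E)
    (hT : transportationPolytope ν μ E' = transportationPolytope ν μ E)
    (hx : x ∈ transportationPolytope ν μ E') (hpos : ∀ i j, (i, j) ∈ E' → 0 < x i j)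
    (hμ : ∀ j, 0 < μ j) (C : Finset (Fin m)) (hC : 0 < surplus ν μ E' C) :
    ∃ D, 0 < surplus ν μ E' D ∧ nbr E D = nbr E' D ∧
      surplus ν μ E' D ≤ surplus ν μ E' C := by
  induction C using Finset.strongInduction with
  | H C ih =>
  by_cases hs : (nbr E C \ nbr E' C).Nonempty
  swap
  · rw [not_nonempty_iff_eq_empty, sdiff_eq_empty_iff_subset] at hs
    exact ⟨C, hC, hs.antisymm (nbr_subset_nbr hE), le_rfl⟩
  have hcov : ∀ j, ∃ i, (i, j) ∈ E' := fun j => exists_mem_of_pos hx (hμ j)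
  set V := reachSet E E' C
  have hV : IsAltClosed E E' V := isAltClosed_reachSet
  have hsplit : surplus ν μ E' (C ∪ V) + surplus ν μ E' (C ∩ V) = surplus ν μ E' C := by
    rw [surplus_union_add_surplus_inter (nbr_inter_of_isAltClosed hE hV),
      surplus_eq_zero_of_isAltClosed hE hx hV, add_zero]
  have hU := surplus_nonneg_of_mem hx (C ∪ V)
  have hI := surplus_nonneg_of_mem hx (C ∩ V)
  by_cases hUpos : 0 < surplus ν μ E' (C ∪ V)
  · refine ⟨C ∪ V, hUpos, ?_, by linarith⟩
    have hstray := sdiff_nbr_subset_nbr_reachSet (E := E) (C := C) hcov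
    rw [nbr_union, nbr_union, nbr_eq_of_isAltClosed hE hcov hV]
    refine Subset.antisymm (fun j hj => ?_) (union_subset_union (nbr_subset_nbr hE) subset_rfl)
    by_cases hjC : j ∈ nbr E' C
    · exact mem_union_left _ hjC
    rcases mem_union.1 hj with hj | hj
    · exact mem_union_right _ (hstray (mem_sdiff.2 ⟨hj, hjC⟩))
    · exact mem_union_right _ hj
  · have hCV : C ∩ V ⊂ C := inter_subset_left.ssubset_of_not_subset fun h =>
      not_subset_reachSet hE hT hx hpos hs (h.trans inter_subset_right)
    obtain ⟨D, hD, hDE, hDC⟩ := ih (C ∩ V) hCV (by linarith)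
    exact ⟨D, hD, hDE, by linarith⟩

end RelativeInterior

end

theorem stmt_14_general {m n : ℕ}
    (ν : Fin m → ℝ) (μ : Fin n → ℝ) (E : Finset (Fin m × Fin n))
    (hμ : ∀ j, 0 < μ j)
    (hne : (transportationPolytope ν μ E).Nonempty) :
    crpGap ν μ E = crpGap ν μ (E \ redundantEdges ν μ E) := by
  have hT := transportationPolytope_sdiff_redundantEdges (ν := ν) (μ := μ) (E := E)
  obtain ⟨x, hx, hpos⟩ := exists_pos_on_sdiff_redundantEdges hne
  rw [← hT] at hx
  rw [crpGap_eq_sInf_surplus, crpGap_eq_sInf_surplus, redundantEdges_sdiff_redundantEdges,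
    sdiff_empty]
  apply csInf_eq_csInf_of_forall_exists_le
  · rintro _ ⟨C, hC, rfl⟩
    exact ⟨_, ⟨C, hC, rfl⟩, surplus_le_surplus (fun j => (hμ j).le) sdiff_subset⟩
  · rintro _ ⟨C, hC, rfl⟩
    obtain ⟨D, hD, hDE, hDC⟩ :=
      exists_nbr_eq_surplus_le sdiff_subset hT hx (fun i j h => hpos (i, j) h) hμ C hC
    exact ⟨_, ⟨D, hD, rfl⟩, by rwa [surplus, hDE]⟩

/-- removing the redundant edges does not change the CRP-gap, where each
CRP-gap is computed with respect to the redundant edges of its own edge set. -/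
theorem stmt_14 {m n : ℕ} (hm : 1 ≤ m) (hn : 1 ≤ n)
    (ν : Fin m → ℝ) (μ : Fin n → ℝ) (E : Finset (Fin m × Fin n))
    (hν : ∀ i, 0 < ν i) (hμ : ∀ j, 0 < μ j)
    (hne : (transportationPolytope ν μ E).Nonempty)
    (hC : ∃ C : Finset (Fin m),
      (∑ i ∈ C, ν i) < ∑ j ∈ nbr (E \ redundantEdges ν μ E) C, μ j) :
    crpGap ν μ E = crpGap ν μ (E \ redundantEdges ν μ E) :=
  stmt_14_general ν μ E hμ hne
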